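/- Let p⃗_j = (a_j + b_j·i, c_j + d_j·i) ∈ ℂ² for j = 1, 2, 3, 4, and define the vectors V_α := ((c₁−c₃)/2 − (c₂−c₄)/2, (d₁−d₃)/2 − (d₂−d₄)/2, −(a₁−a₃)/2 + (a₂−a₄)/2, −(b₁−b₃)/2 + (b₂−b₄)/2, 0, 0) and V_β := (−(d₁−d₃)/2 + (d₂−d₄)/2, (c₁−c₃)/2 − (c₂−c₄)/2, (b₁−b₃)/2 − (b₂−b₄)/2, −(a₁−a₃)/2 + (a₂−a₄)/2, 0, 0) in ℝ⁶. Then V_α · V_β = 0 and ‖V_α‖ = ‖V_β‖ = (1/2)·‖(p⃗₁ − p⃗₃) − (p⃗₂ − p⃗₄)‖. Consequently, with G_{1,3}, G_{2,4} as defined below, for all (α, β) ∈ ℝ², ‖G_{1,3}(α, β) − G_{2,4}(α, β)‖ ≥ ‖(α, β)‖·(1/2)·‖(p⃗₁ − p⃗₃) − (p⃗₂ − p⃗₄)‖ − (1/2)·‖(p⃗₁ + p⃗₃) − (p⃗₂ + p⃗₄)‖. -/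

import Mathlib

noncomputable section

/-- `ℂ²` with its Euclidean (Hermitian) metric. -/
abbrev C2 := EuclideanSpace ℂ (Fin 2)

/-- The point `(a + b·i, c + d·i)` of `ℂ²`. -/
def pC (a b c d : ℝ) : C2 :=
  WithLp.toLp 2 (fun i => if i = 0 then Complex.mk a b else Complex.mk c d)

/-- The point of `ℝ⁶` with coordinates `(x₁, …, x₆)`. -/
def pt6 (x₁ x₂ x₃ x₄ x₅ x₆ : ℝ) : EuclideanSpace ℝ (Fin 6) :=
  WithLp.toLp 2 (fun i => if i = 0 then x₁ else if i = 1 then x₂ else if i = 2 then x₃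
    else if i = 3 then x₄ else if i = 4 then x₅ else x₆)

/-- The parameterization `G : ℝ² → ℝ⁶` of the real 2-plane corresponding to the auxiliary
complex line associated to the points `(a + b·i, c + d·i)` and `(a' + b'·i, c' + d'·i)`
of `ℂ²`. -/
def Gmap (a b c d a' b' c' d' : ℝ) (α β : ℝ) : EuclideanSpace ℝ (Fin 6) :=
  pt6 ((a + a') / 2) ((b + b') / 2) ((c + c') / 2) ((d + d') / 2) 0 0
    + α • pt6 ((c - c') / 2) ((d - d') / 2) (-((a - a') / 2)) (-((b - b') / 2)) 1 0
    + β • pt6 (-((d - d') / 2)) ((c - c') / 2) ((b - b') / 2) (-((a - a') / 2)) 0 1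

lemma norm_sq_pt6 (x₁ x₂ x₃ x₄ x₅ x₆ : ℝ) :
    ‖pt6 x₁ x₂ x₃ x₄ x₅ x₆‖ ^ 2 = x₁^2 + x₂^2 + x₃^2 + x₄^2 + x₅^2 + x₆^2 := by
  rw [EuclideanSpace.norm_eq, Real.sq_sqrt (by positivity)]
  simp [Fin.sum_univ_six, pt6, sq_abs]

lemma inner_pt6 (x₁ x₂ x₃ x₄ x₅ x₆ y₁ y₂ y₃ y₄ y₅ y₆ : ℝ) :
    (inner ℝ (pt6 x₁ x₂ x₃ x₄ x₅ x₆) (pt6 y₁ y₂ y₃ y₄ y₅ y₆) : ℝ)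
      = x₁*y₁ + x₂*y₂ + x₃*y₃ + x₄*y₄ + x₅*y₅ + x₆*y₆ := by
  simp [PiLp.inner_apply, Fin.sum_univ_six, pt6]
  ring

lemma norm_sq_C2 (w : C2) :
    ‖w‖ ^ 2 = (w 0).re^2 + (w 0).im^2 + (w 1).re^2 + (w 1).im^2 := by
  rw [EuclideanSpace.norm_eq, Real.sq_sqrt (by positivity)]
  simp [Fin.sum_univ_two, Complex.sq_norm, Complex.normSq_apply]
  ring

lemma eq_of_sq_eq_sq' {a b : ℝ} (ha : 0 ≤ a) (hb : 0 ≤ b) (h : a ^ 2 = b ^ 2) : a = b := by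
  nlinarith

/-- the two direction vectors of `G_{1,3} - G_{2,4}` are orthogonal,
have norm `(1/2)·‖(p₁ - p₃) - (p₂ - p₄)‖`, and the resulting triangle-inequality lower
bound for `‖G_{1,3}(α,β) - G_{2,4}(α,β)‖` holds. -/
theorem statement18 (a₁ b₁ c₁ d₁ a₂ b₂ c₂ d₂ a₃ b₃ c₃ d₃ a₄ b₄ c₄ d₄ : ℝ)
    (p₁ p₂ p₃ p₄ : C2)
    (hp₁ : p₁ = pC a₁ b₁ c₁ d₁) (hp₂ : p₂ = pC a₂ b₂ c₂ d₂)
    (hp₃ : p₃ = pC a₃ b₃ c₃ d₃) (hp₄ : p₄ = pC a₄ b₄ c₄ d₄)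
    (Vα Vβ : EuclideanSpace ℝ (Fin 6))
    (hVα : Vα = pt6 ((c₁ - c₃) / 2 - (c₂ - c₄) / 2) ((d₁ - d₃) / 2 - (d₂ - d₄) / 2)
      (-((a₁ - a₃) / 2) + (a₂ - a₄) / 2) (-((b₁ - b₃) / 2) + (b₂ - b₄) / 2) 0 0)
    (hVβ : Vβ = pt6 (-((d₁ - d₃) / 2) + (d₂ - d₄) / 2) ((c₁ - c₃) / 2 - (c₂ - c₄) / 2)
      ((b₁ - b₃) / 2 - (b₂ - b₄) / 2) (-((a₁ - a₃) / 2) + (a₂ - a₄) / 2) 0 0) :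
    (inner ℝ Vα Vβ : ℝ) = 0 ∧
    ‖Vα‖ = 1 / 2 * ‖(p₁ - p₃) - (p₂ - p₄)‖ ∧
    ‖Vβ‖ = 1 / 2 * ‖(p₁ - p₃) - (p₂ - p₄)‖ ∧
    ∀ α β : ℝ,
      Real.sqrt (α ^ 2 + β ^ 2) * (1 / 2 * ‖(p₁ - p₃) - (p₂ - p₄)‖) -
          1 / 2 * ‖(p₁ + p₃) - (p₂ + p₄)‖ ≤
        ‖Gmap a₁ b₁ c₁ d₁ a₃ b₃ c₃ d₃ α β - Gmap a₂ b₂ c₂ d₂ a₄ b₄ c₄ d₄ α β‖ := by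
  have hinner : (inner ℝ Vα Vβ : ℝ) = 0 := by rw [hVα, hVβ, inner_pt6]; ring
  have hNsq : ‖(p₁ - p₃) - (p₂ - p₄)‖ ^ 2
      = (a₁-a₃-(a₂-a₄))^2 + (b₁-b₃-(b₂-b₄))^2 + (c₁-c₃-(c₂-c₄))^2 + (d₁-d₃-(d₂-d₄))^2 := by
    rw [norm_sq_C2]
    subst hp₁ hp₂ hp₃ hp₄
    simp [pC]
  have hVαn : ‖Vα‖ = 1 / 2 * ‖(p₁ - p₃) - (p₂ - p₄)‖ := by
    refine eq_of_sq_eq_sq' (norm_nonneg _) (by positivity) ?_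
    rw [hVα, norm_sq_pt6, mul_pow, hNsq]; ring
  have hVβn : ‖Vβ‖ = 1 / 2 * ‖(p₁ - p₃) - (p₂ - p₄)‖ := by
    refine eq_of_sq_eq_sq' (norm_nonneg _) (by positivity) ?_
    rw [hVβ, norm_sq_pt6, mul_pow, hNsq]; ring
  refine ⟨hinner, hVαn, hVβn, ?_⟩
  intro α β
  set M : EuclideanSpace ℝ (Fin 6) :=
    pt6 ((a₁+a₃)/2 - (a₂+a₄)/2) ((b₁+b₃)/2 - (b₂+b₄)/2) ((c₁+c₃)/2 - (c₂+c₄)/2)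
      ((d₁+d₃)/2 - (d₂+d₄)/2) 0 0 with hM
  have hMn : ‖M‖ = 1 / 2 * ‖(p₁ + p₃) - (p₂ + p₄)‖ := by
    refine eq_of_sq_eq_sq' (norm_nonneg _) (by positivity) ?_
    have hNsq2 : ‖(p₁ + p₃) - (p₂ + p₄)‖ ^ 2
        = (a₁+a₃-(a₂+a₄))^2 + (b₁+b₃-(b₂+b₄))^2 + (c₁+c₃-(c₂+c₄))^2 + (d₁+d₃-(d₂+d₄))^2 := by
      rw [norm_sq_C2]
      subst hp₁ hp₂ hp₃ hp₄
      simp [pC]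
    rw [hM, norm_sq_pt6, mul_pow, hNsq2]; ring
  have hD : Gmap a₁ b₁ c₁ d₁ a₃ b₃ c₃ d₃ α β - Gmap a₂ b₂ c₂ d₂ a₄ b₄ c₄ d₄ α β
      = (α • Vα + β • Vβ) + M := by
    rw [hVα, hVβ, hM]
    ext i
    fin_cases i <;>
      simp [Gmap, pt6, PiLp.add_apply, PiLp.sub_apply, PiLp.smul_apply, smul_eq_mul] <;> ring
  have hXn : ‖α • Vα + β • Vβ‖ = Real.sqrt (α ^ 2 + β ^ 2) * ‖Vα‖ := by
    refine eq_of_sq_eq_sq' (norm_nonneg _) (by positivity) ?_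
    rw [norm_add_sq_real, mul_pow, Real.sq_sqrt (by positivity), norm_smul, norm_smul,
      real_inner_smul_left, real_inner_smul_right, hinner]
    have : ‖Vβ‖ = ‖Vα‖ := by rw [hVαn, hVβn]
    rw [this]
    simp [mul_pow, sq_abs]
    ring
  rw [hD]
  have h1 : ‖α • Vα + β • Vβ‖ ≤ ‖(α • Vα + β • Vβ) + M‖ + ‖M‖ := by
    have := norm_add_le ((α • Vα + β • Vβ) + M) (-M)
    simpa using this
  rw [← hVαn, ← hXn, ← hMn]
  linarith
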